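/- Let R be a discrete valuation ring with uniformizer ϖ whose fraction field K has characteristic 2, and for m ≥ 0 let L_m = R·x² + R·y² + ϖ^m R·xy ⊆ K[x,y]_{(2)}. Then the lattices L_m are pairwise non-homothetic: for integers m ≠ m' there is no c ∈ K^× with L_{m'} = c • L_m. Consequently, there are infinitely many homothety classes of GL(2,R)-invariant R-lattices in K[x,y]_{(2)}. -/

import Mathlib

open MvPolynomial Pointwise

/-- The change-of-variables action of a matrix `g` on polynomials, induced by the
algebra substitution `x_i ↦ ∑ j, g i j • x_j`. -/
noncomputable def changeOfVar {K : Type*} [CommSemiring K] {n : ℕ}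
    (g : Matrix (Fin n) (Fin n) K) :
    MvPolynomial (Fin n) K →ₐ[K] MvPolynomial (Fin n) K :=
  aeval fun i => ∑ j, C (g i j) * X j

/-- An `R`-lattice in the space of homogeneous polynomials of degree `d` over `K`:
a finitely generated `R`-submodule whose `K`-span is the whole space `K[x_1,…,x_n]_{(d)}`. -/
def IsPolyLattice (R : Type*) {K : Type*} [CommRing R] [Field K] [Algebra R K]
    {n : ℕ} (d : ℕ) (L : Submodule R (MvPolynomial (Fin n) K)) : Prop :=
  L.FG ∧ Submodule.span K (L : Set (MvPolynomial (Fin n) K)) =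
    homogeneousSubmodule (Fin n) K d

/-- The lattice `L_m = R·x² + R·y² + ϖ^m R·xy` inside `K[x,y]_{(2)}`. -/
noncomputable def Lm (R K : Type*) [CommRing R] [Field K] [Algebra R K]
    (ϖ : R) (m : ℕ) : Submodule R (MvPolynomial (Fin 2) K) :=
  Submodule.span R
    {X 0 ^ 2, X 1 ^ 2, C (algebraMap R K (ϖ ^ m)) * (X 0 * X 1)}

/-! ### Auxiliary lemmas -/

/-- The exponent of `x²`. -/
noncomputable abbrev dxx : Fin 2 →₀ ℕ := Finsupp.single 0 2
/-- The exponent of `y²`. -/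
noncomputable abbrev dyy : Fin 2 →₀ ℕ := Finsupp.single 1 2
/-- The exponent of `xy`. -/
noncomputable abbrev dxy : Fin 2 →₀ ℕ := Finsupp.single 0 1 + Finsupp.single 1 1

theorem dxx_ne_dyy : dxx ≠ dyy := by
  intro h; simpa using DFunLike.congr_fun h 0
theorem dxx_ne_dxy : dxx ≠ dxy := by
  intro h; simpa using DFunLike.congr_fun h 0
theorem dyy_ne_dxy : dyy ≠ dxy := by
  intro h; simpa using DFunLike.congr_fun h 1

theorem XY_eq (K : Type*) [Field K] :
    (X 0 * X 1 : MvPolynomial (Fin 2) K) = monomial dxy 1 := by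
  rw [X, X, monomial_mul, mul_one]

section CoeffLemmas
variable {R K : Type*} [CommRing R] [Field K] [Algebra R K]

theorem coeff_mem_of_mem_Lm {ϖ : R} {m : ℕ} {p : MvPolynomial (Fin 2) K}
    (hp : p ∈ Lm R K ϖ m) :
    (∃ a : R, MvPolynomial.coeff dxx p = algebraMap R K a) ∧
    (∃ t : R, MvPolynomial.coeff dxy p = algebraMap R K (ϖ ^ m * t)) := by
  induction hp using Submodule.span_induction with
  | mem x hx =>
    rcases hx with h | h | h
    · subst h
      constructor
      · exact ⟨1, by simp [X_pow_eq_monomial, coeff_monomial]⟩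
      · exact ⟨0, by rw [X_pow_eq_monomial, coeff_monomial, if_neg dxx_ne_dxy]; simp⟩
    · subst h
      constructor
      · exact ⟨0, by rw [X_pow_eq_monomial, coeff_monomial, if_neg (Ne.symm dxx_ne_dyy)]; simp⟩
      · exact ⟨0, by rw [X_pow_eq_monomial, coeff_monomial, if_neg dyy_ne_dxy]; simp⟩
    · subst h
      constructor
      · exact ⟨0, by rw [XY_eq, C_mul_monomial, mul_one, coeff_monomial,
          if_neg (Ne.symm dxx_ne_dxy)]; simp⟩
      · exact ⟨1, by rw [XY_eq, C_mul_monomial, mul_one, coeff_monomial, if_pos rfl, mul_one]⟩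
  | zero => exact ⟨⟨0, by simp⟩, ⟨0, by simp⟩⟩
  | add x y _ _ hx hy =>
    obtain ⟨⟨a₁, h1⟩, ⟨t₁, h3⟩⟩ := hx
    obtain ⟨⟨a₂, g1⟩, ⟨t₂, g3⟩⟩ := hy
    refine ⟨⟨a₁ + a₂, ?_⟩, ⟨t₁ + t₂, ?_⟩⟩
    · simp [MvPolynomial.coeff_add, h1, g1, map_add]
    · simp [MvPolynomial.coeff_add, h3, g3, map_add, mul_add, map_mul]
  | smul r x _ hx =>
    obtain ⟨⟨a, h1⟩, ⟨t, h3⟩⟩ := hx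
    refine ⟨⟨r * a, ?_⟩, ⟨r * t, ?_⟩⟩
    · rw [MvPolynomial.coeff_smul, h1, Algebra.smul_def, ← map_mul]
    · rw [MvPolynomial.coeff_smul, h3, Algebra.smul_def, ← map_mul,
        show r * (ϖ ^ m * t) = ϖ ^ m * (r * t) by ring]

theorem not_homothetic [IsDomain R] [IsFractionRing R K]
    (ϖ : R) (hϖ : Irreducible ϖ) :
    ∀ m m' : ℕ, m ≠ m' → ¬ ∃ c : Kˣ, Lm R K ϖ m' = (c : K) • Lm R K ϖ m := by
  intro m m' hne ⟨c, hc⟩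
  have inj : Function.Injective (algebraMap R K) := IsFractionRing.injective R K
  have hπ0 : ϖ ≠ 0 := hϖ.ne_zero
  -- (1) X0² ∈ Lm m' = c • Lm m : gives c * algebraMap a = 1
  obtain ⟨p, hp, hpc⟩ : ∃ p ∈ Lm R K ϖ m, (c : K) • p = X 0 ^ 2 := by
    have hx2 : (X 0 ^ 2 : MvPolynomial (Fin 2) K) ∈ Lm R K ϖ m' :=
      Submodule.subset_span (by simp)
    rw [hc] at hx2
    exact Set.mem_smul_set.mp hx2
  obtain ⟨⟨a, ha⟩, -⟩ := coeff_mem_of_mem_Lm hp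
  have h1 : (c : K) * algebraMap R K a = 1 := by
    have := congrArg (MvPolynomial.coeff dxx) hpc
    rwa [MvPolynomial.coeff_smul, smul_eq_mul, ha,
      X_pow_eq_monomial, coeff_monomial, if_pos rfl] at this
  -- (2) c • X0² ∈ Lm m' : gives c = algebraMap a'
  obtain ⟨a', ha'⟩ : ∃ a' : R, (c : K) = algebraMap R K a' := by
    have hx2 : (c : K) • (X 0 ^ 2 : MvPolynomial (Fin 2) K) ∈ Lm R K ϖ m' := by
      rw [hc]
      exact Submodule.smul_mem_pointwise_smul _ _ _ (Submodule.subset_span (by simp))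
    obtain ⟨⟨a', ha'⟩, -⟩ := coeff_mem_of_mem_Lm hx2
    refine ⟨a', ?_⟩
    rwa [MvPolynomial.coeff_smul, smul_eq_mul, X_pow_eq_monomial, coeff_monomial,
      if_pos rfl, mul_one] at ha'
  -- a' is a unit
  have hu : a' * a = 1 := by
    apply inj
    rw [map_mul, map_one, ← ha', h1]
  -- (3) c • (π^m·xy) ∈ Lm m' : gives a' * ϖ^m = ϖ^(m') * t
  obtain ⟨t, ht⟩ : ∃ t : R, a' * ϖ ^ m = ϖ ^ m' * t := by
    have hg : (c : K) • (C (algebraMap R K (ϖ ^ m)) * (X 0 * X 1)) ∈ Lm R K ϖ m' := by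
      rw [hc]
      exact Submodule.smul_mem_pointwise_smul _ _ _ (Submodule.subset_span (by simp))
    obtain ⟨-, ⟨t, ht⟩⟩ := coeff_mem_of_mem_Lm hg
    rw [MvPolynomial.coeff_smul, smul_eq_mul, XY_eq, C_mul_monomial, mul_one,
      coeff_monomial, if_pos rfl, ha', ← map_mul] at ht
    exact ⟨t, inj ht⟩
  -- (4) (π^(m')·xy) ∈ c • Lm m : gives a' * (ϖ^m * s) = ϖ^(m')
  obtain ⟨s, hs⟩ : ∃ s : R, a' * (ϖ ^ m * s) = ϖ ^ m' := by
    obtain ⟨q, hq, hqc⟩ : ∃ q ∈ Lm R K ϖ m,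
        (c : K) • q = C (algebraMap R K (ϖ ^ m')) * (X 0 * X 1) := by
      have hg : (C (algebraMap R K (ϖ ^ m')) * (X 0 * X 1) : MvPolynomial (Fin 2) K)
          ∈ Lm R K ϖ m' := Submodule.subset_span (by simp)
      rw [hc] at hg
      exact Set.mem_smul_set.mp hg
    obtain ⟨-, ⟨s, hs⟩⟩ := coeff_mem_of_mem_Lm hq
    have := congrArg (MvPolynomial.coeff dxy) hqc
    rw [MvPolynomial.coeff_smul, smul_eq_mul, hs, XY_eq, C_mul_monomial, mul_one,
      coeff_monomial, if_pos rfl, ha', ← map_mul] at this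
    exact ⟨s, inj this⟩
  -- contradiction
  have hϖnu : ¬ IsUnit ϖ := hϖ.not_isUnit
  rcases Nat.lt_or_ge m m' with h | h
  · obtain ⟨k, hk⟩ : ∃ k, m' = m + k + 1 := ⟨m' - m - 1, by omega⟩
    have : a' = ϖ ^ (k + 1) * t := by
      have hcan : ϖ ^ m * a' = ϖ ^ m * (ϖ ^ (k + 1) * t) := by
        rw [show ϖ ^ m * (ϖ ^ (k+1) * t) = ϖ ^ (m + k + 1) * t by ring, ← hk, ← ht]; ring
      exact mul_left_cancel₀ (pow_ne_zero m hπ0) hcan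
    apply hϖnu
    apply isUnit_of_dvd_one
    refine ⟨ϖ ^ k * t * a, ?_⟩
    rw [← hu, this]; ring
  · obtain ⟨k, hk⟩ : ∃ k, m = m' + k + 1 := ⟨m - m' - 1, by omega⟩
    have h1' : ϖ ^ m' * 1 = ϖ ^ m' * (a' * (ϖ ^ (k + 1) * s)) := by
      rw [mul_one, show ϖ ^ m' * (a' * (ϖ ^ (k+1) * s)) = a' * (ϖ ^ (m' + k + 1) * s) by ring,
        ← hk, hs]
    have : (1 : R) = a' * (ϖ ^ (k + 1) * s) := mul_left_cancel₀ (pow_ne_zero m' hπ0) h1'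
    apply hϖnu
    apply isUnit_of_dvd_one
    exact ⟨a' * (ϖ ^ k * s), by rw [this]; ring⟩

theorem degree_fin2 (d : Fin 2 →₀ ℕ) : d.degree = d 0 + d 1 := by
  rw [Finsupp.degree, ← Fin.sum_univ_two d]
  exact Finset.sum_subset (Finset.subset_univ _) (by
    intro i _ hi
    simpa using hi)

theorem deg2_classify : {d : Fin 2 →₀ ℕ | d.degree = 2} = {dxx, dyy, dxy} := by
  ext d
  simp only [Set.mem_setOf_eq, Set.mem_insert_iff, Set.mem_singleton_iff, degree_fin2]
  constructor
  · intro h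
    have h0 : d 0 = 0 ∨ d 0 = 1 ∨ d 0 = 2 := by omega
    rcases h0 with h0 | h0 | h0
    · right; left
      ext i; fin_cases i <;> simp [Finsupp.single_apply] <;> omega
    · right; right
      ext i; fin_cases i <;> simp [Finsupp.single_apply] <;> omega
    · left
      ext i; fin_cases i <;> simp [Finsupp.single_apply] <;> omega
  · rintro (rfl | rfl | rfl) <;> simp [Finsupp.single_apply]

theorem spanK [IsDomain R] [IsFractionRing R K] (ϖ : R) (hϖ : ϖ ≠ 0) (m : ℕ) :
    Submodule.span K ((Lm R K ϖ m : Set (MvPolynomial (Fin 2) K))) =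
      homogeneousSubmodule (Fin 2) K 2 := by
  have hπK : algebraMap R K (ϖ ^ m) ≠ 0 := fun h =>
    pow_ne_zero m hϖ ((map_eq_zero_iff _ (IsFractionRing.injective R K)).mp h)
  rw [Lm, Submodule.span_span_of_tower]
  have step2 : Submodule.span K ({X 0 ^ 2, X 1 ^ 2,
      C (algebraMap R K (ϖ ^ m)) * (X 0 * X 1)} : Set (MvPolynomial (Fin 2) K)) =
      Submodule.span K {X 0 ^ 2, X 1 ^ 2, X 0 * X 1} := by
    apply le_antisymm
    · apply Submodule.span_le.mpr
      rintro x (rfl | rfl | rfl)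
      · exact Submodule.subset_span (by simp)
      · exact Submodule.subset_span (by simp)
      · rw [← smul_eq_C_mul]
        exact Submodule.smul_mem _ _ (Submodule.subset_span (by simp))
    · apply Submodule.span_le.mpr
      rintro x (rfl | rfl | rfl)
      · exact Submodule.subset_span (by simp)
      · exact Submodule.subset_span (by simp)
      · have : (X 0 * X 1 : MvPolynomial (Fin 2) K) =
            (algebraMap R K (ϖ ^ m))⁻¹ • (C (algebraMap R K (ϖ ^ m)) * (X 0 * X 1)) := by
          rw [smul_eq_C_mul, ← mul_assoc, ← C_mul, inv_mul_cancel₀ hπK, C_1, one_mul]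
        have key := Submodule.smul_mem (Submodule.span K ({X 0 ^ 2, X 1 ^ 2,
            C (algebraMap R K (ϖ ^ m)) * (X 0 * X 1)} : Set (MvPolynomial (Fin 2) K)))
          ((algebraMap R K (ϖ ^ m))⁻¹) (Submodule.subset_span
          (Set.mem_insert_iff.mpr (Or.inr (Set.mem_insert_iff.mpr (Or.inr rfl)))))
        rwa [← this] at key
  rw [step2, homogeneousSubmodule_eq_finsupp_supported, AddMonoidAlgebra.supported_eq_span_single,
    deg2_classify]
  congr 1
  rw [Set.image_insert_eq, Set.image_insert_eq, Set.image_singleton]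
  simp only [single_eq_monomial]
  rw [← X_pow_eq_monomial, ← X_pow_eq_monomial, ← XY_eq]

section Invariance
variable [CharP K 2] (ϖ : R) (m : ℕ)

set_option maxHeartbeats 1000000 in
theorem map_Lm_le (M : Matrix (Fin 2) (Fin 2) R) :
    (Lm R K ϖ m).map (((changeOfVar (M.map (algebraMap R K))).toLinearMap).restrictScalars R)
      ≤ Lm R K ϖ m := by
  set A := M.map (algebraMap R K) with hA
  rw [Lm, Submodule.map_span, Submodule.span_le]
  rintro x ⟨y, (rfl | rfl | rfl), rfl⟩
  · -- X 0 ^ 2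
    have expand : changeOfVar A (X 0 ^ 2) =
        (M 0 0 ^ 2) • (X 0 ^ 2 : MvPolynomial (Fin 2) K) + (M 0 1 ^ 2) • (X 1 ^ 2) := by
      have h2 : changeOfVar A (X 0) = C (A 0 0) * X 0 + C (A 0 1) * X 1 := by
        simp [changeOfVar, Fin.sum_univ_two]
      rw [map_pow, h2, add_pow_char, mul_pow, mul_pow, ← C_pow, ← C_pow]
      rw [Algebra.smul_def, Algebra.smul_def]
      simp [IsScalarTower.algebraMap_apply R K (MvPolynomial (Fin 2) K), algebraMap_eq,
        hA, Matrix.map_apply, map_pow]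
    show changeOfVar A (X 0 ^ 2) ∈ _
    rw [expand]
    exact add_mem
      (Submodule.smul_mem _ _ (Submodule.subset_span (by simp)))
      (Submodule.smul_mem _ _ (Submodule.subset_span (by simp)))
  · -- X 1 ^ 2
    have expand : changeOfVar A (X 1 ^ 2) =
        (M 1 0 ^ 2) • (X 0 ^ 2 : MvPolynomial (Fin 2) K) + (M 1 1 ^ 2) • (X 1 ^ 2) := by
      have h2 : changeOfVar A (X 1) = C (A 1 0) * X 0 + C (A 1 1) * X 1 := by
        simp [changeOfVar, Fin.sum_univ_two]
      rw [map_pow, h2, add_pow_char, mul_pow, mul_pow, ← C_pow, ← C_pow]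
      rw [Algebra.smul_def, Algebra.smul_def]
      simp [IsScalarTower.algebraMap_apply R K (MvPolynomial (Fin 2) K), algebraMap_eq,
        hA, Matrix.map_apply, map_pow]
    show changeOfVar A (X 1 ^ 2) ∈ _
    rw [expand]
    exact add_mem
      (Submodule.smul_mem _ _ (Submodule.subset_span (by simp)))
      (Submodule.smul_mem _ _ (Submodule.subset_span (by simp)))
  · -- C (π^m) * (X 0 * X 1)
    have expand : changeOfVar A (C (algebraMap R K (ϖ ^ m)) * (X 0 * X 1)) =
        (ϖ ^ m * (M 0 0 * M 1 0)) • (X 0 ^ 2 : MvPolynomial (Fin 2) K)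
        + (ϖ ^ m * (M 0 1 * M 1 1)) • (X 1 ^ 2)
        + (M 0 0 * M 1 1 + M 0 1 * M 1 0) • (C (algebraMap R K (ϖ ^ m)) * (X 0 * X 1)) := by
      have h0 : changeOfVar A (X 0) = C (A 0 0) * X 0 + C (A 0 1) * X 1 := by
        simp [changeOfVar, Fin.sum_univ_two]
      have h1 : changeOfVar A (X 1) = C (A 1 0) * X 0 + C (A 1 1) * X 1 := by
        simp [changeOfVar, Fin.sum_univ_two]
      have hC : changeOfVar A (C (algebraMap R K (ϖ ^ m))) = C (algebraMap R K (ϖ ^ m)) := by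
        simp [changeOfVar, aeval_C, algebraMap_eq]
      rw [map_mul, map_mul, h0, h1, hC]
      rw [Algebra.smul_def, Algebra.smul_def, Algebra.smul_def]
      simp only [IsScalarTower.algebraMap_apply R K (MvPolynomial (Fin 2) K), algebraMap_eq,
        hA, Matrix.map_apply, map_pow, map_mul, map_add, MvPolynomial.algebraMap_apply]
      ring
    show changeOfVar A (C (algebraMap R K (ϖ ^ m)) * (X 0 * X 1)) ∈ _
    rw [expand]
    refine add_mem (add_mem
      (Submodule.smul_mem _ _ (Submodule.subset_span (by simp)))
      (Submodule.smul_mem _ _ (Submodule.subset_span (by simp))))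
      (Submodule.smul_mem _ _ (Submodule.subset_span
        (Set.mem_insert_iff.mpr (Or.inr (Set.mem_insert_iff.mpr (Or.inr rfl))))))

end Invariance
end CoeffLemmas

theorem changeOfVar_comp {K : Type*} [CommSemiring K] {n : ℕ}
    (A B : Matrix (Fin n) (Fin n) K) :
    (changeOfVar A).comp (changeOfVar B) = changeOfVar (B * A) := by
  apply MvPolynomial.algHom_ext
  intro i
  simp [changeOfVar, Matrix.mul_apply, Finset.mul_sum, Finset.sum_mul, map_sum, mul_assoc]
  rw [Finset.sum_comm]

theorem changeOfVar_one {K : Type*} [CommSemiring K] {n : ℕ} :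
    changeOfVar (1 : Matrix (Fin n) (Fin n) K) = AlgHom.id K _ := by
  apply MvPolynomial.algHom_ext
  intro i
  simp [changeOfVar, Matrix.one_apply]

section Invariance2
variable {R K : Type*} [CommRing R] [Field K] [Algebra R K] [CharP K 2]

theorem Lm_invariant (ϖ : R) (m : ℕ) (g : GL (Fin 2) R) :
    (Lm R K ϖ m).map (((changeOfVar (((g : Matrix (Fin 2) (Fin 2) R)).map
      (algebraMap R K))).toLinearMap).restrictScalars R) = Lm R K ϖ m := by
  refine le_antisymm (map_Lm_le ϖ m _) ?_
  have key : ∀ p : MvPolynomial (Fin 2) K,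
      changeOfVar (((g : Matrix (Fin 2) (Fin 2) R)).map (algebraMap R K))
        (changeOfVar ((((g⁻¹ : GL (Fin 2) R) : Matrix (Fin 2) (Fin 2) R)).map
          (algebraMap R K)) p) = p := by
    intro p
    have hcomp := changeOfVar_comp
      (((g : Matrix (Fin 2) (Fin 2) R)).map (algebraMap R K))
      ((((g⁻¹ : GL (Fin 2) R) : Matrix (Fin 2) (Fin 2) R)).map (algebraMap R K))
    have h1 : (((g⁻¹ : GL (Fin 2) R) : Matrix (Fin 2) (Fin 2) R)).map (algebraMap R K) *
        ((g : Matrix (Fin 2) (Fin 2) R)).map (algebraMap R K) = 1 := by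
      rw [← Matrix.map_mul]
      norm_cast
      rw [inv_mul_cancel g]
      exact Matrix.map_one _ (map_zero _) (map_one _)
    rw [h1, changeOfVar_one] at hcomp
    exact DFunLike.congr_fun hcomp p
  intro x hx
  exact ⟨_, map_Lm_le ϖ m (((g⁻¹ : GL (Fin 2) R) : Matrix (Fin 2) (Fin 2) R))
    (Submodule.mem_map_of_mem hx), key x⟩

end Invariance2

/-- In equal characteristic 2, the lattices `L_m` are pairwise non-homothetic, and
consequently there are infinitely many homothety classes of `GL(2,R)`-invariant
lattices in `K[x,y]_{(2)}`: no finite set of lattices meets every invariant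
homothety class. -/
theorem Lm_pairwise_non_homothetic
    (R K : Type*) [CommRing R] [IsDomain R] [IsDiscreteValuationRing R]
    [Field K] [Algebra R K] [IsFractionRing R K] [CharP K 2]
    (ϖ : R) (hϖ : Irreducible ϖ) :
    (∀ m m' : ℕ, m ≠ m' → ¬ ∃ c : Kˣ, Lm R K ϖ m' = (c : K) • Lm R K ϖ m) ∧
      ¬ ∃ S : Finset (Submodule R (MvPolynomial (Fin 2) K)),
        ∀ L : Submodule R (MvPolynomial (Fin 2) K), IsPolyLattice R 2 L →
          (∀ g : GL (Fin 2) R,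
            L.map (((changeOfVar ((g : Matrix (Fin 2) (Fin 2) R).map
              (algebraMap R K))).toLinearMap).restrictScalars R) = L) →
          ∃ c : Kˣ, ∃ L' ∈ S, L = (c : K) • L' := by
  have part1 := not_homothetic (K := K) ϖ hϖ
  refine ⟨part1, ?_⟩
  rintro ⟨S, hS⟩
  have hlat : ∀ m : ℕ, IsPolyLattice R 2 (Lm R K ϖ m) := fun m =>
    ⟨Submodule.fg_span ((Set.finite_singleton _).insert _ |>.insert _),
      spanK ϖ hϖ.ne_zero m⟩
  have happ : ∀ m : ℕ, ∃ c : Kˣ, ∃ L' ∈ S, Lm R K ϖ m = (c : K) • L' := fun m =>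
    hS (Lm R K ϖ m) (hlat m) (fun g => Lm_invariant ϖ m g)
  choose c L' hmem heq using happ
  have : ∃ m m' : ℕ, m ≠ m' ∧ (⟨L' m, hmem m⟩ : {x // x ∈ S}) = ⟨L' m', hmem m'⟩ :=
    Finite.exists_ne_map_eq_of_infinite fun m => (⟨L' m, hmem m⟩ : {x // x ∈ S})
  obtain ⟨m, m', hne, hfe⟩ := this
  have hLL : L' m = L' m' := congrArg Subtype.val hfe
  apply part1 m m' hne
  refine ⟨c m' * (c m)⁻¹, ?_⟩
  have hinv : L' m = ((c m : K))⁻¹ • Lm R K ϖ m := by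
    rw [heq m, smul_smul, inv_mul_cancel₀ (Units.ne_zero (c m)), one_smul]
  rw [heq m', ← hLL, hinv, smul_smul]
  congr 1
  simp
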